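/- Let 1 ≤ p, q ≤ ∞ and let σ = (σ_k)_{k≥1} be a non-increasing sequence of positive real numbers with σ_k → 0 such that the diagonal operator D_σ : ℓ_p → ℓ_q is bounded. Then for all n ≥ 1 the n-th entropy number satisfies e_n(D_σ) ≥ sup_{k≥1} ( (λ^k(B_{ℓ_p^k}) / λ^k(B_{ℓ_q^k})) · σ_1·σ_2·…·σ_k / n )^{1/k}, where λ^k denotes k-dimensional Lebesgue measure and B_{ℓ_p^k} is the closed unit ball of ℝ^k with the ℓ_p norm. -/

import Mathlib

/-!
If `D_σ(B_{ℓ_p})` is covered by `n` closed `ε`-balls of `ℓ_q`, project everything onto the first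
`m` coordinates. The projection `ℓ_q → ℓ_q^m` is `1`-Lipschitz, so it turns the cover into a
cover by `n` balls of `ℓ_q^m` of radius `ε`; and since vectors of `ℓ_p^m` extend by zero to
`ℓ_p` without changing their norm, the projected set contains `diag(σ_1, …, σ_m)(B_{ℓ_p^m})`.
Comparing Lebesgue volumes gives `σ_1 ⋯ σ_m λ(B_{ℓ_p^m}) ≤ n ε^m λ(B_{ℓ_q^m})`; taking `m`-th roots
and letting `ε` decrease to `e_n(D_σ)` gives the bound.
-/

open Metric Filter MeasureTheory
open scoped ENNReal

noncomputable def entropyNumber {Y : Type*} [SeminormedAddCommGroup Y]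
    (n : ℕ) (T : Set Y) : ℝ :=
  sInf {ε : ℝ | 0 < ε ∧ ∃ y : Fin n → Y, T ⊆ ⋃ i, Metric.closedBall (y i) ε}

/-- The `k`-dimensional Lebesgue volume of the closed unit ball of `ℓ_p^k = PiLp p ℝ^k`
(computed in the underlying space `Fin k → ℝ`). -/
noncomputable def ballVolume (p : ℝ≥0∞) [Fact (1 ≤ p)] (k : ℕ) : ℝ≥0∞ :=
  volume ((WithLp.equiv p (∀ _ : Fin k, ℝ)) ''
    Metric.closedBall (0 : PiLp p (fun _ : Fin k => ℝ)) 1)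

section Truncation

noncomputable def lpExtendByZero (p : ℝ≥0∞) (m : ℕ) (v : PiLp p (fun _ : Fin m => ℝ)) :
    lp (fun _ : ℕ => ℝ) p :=
  ⟨fun j => if h : j < m then v ⟨j, h⟩ else 0,
    (memℓp_zero <| (Set.finite_lt_nat m).subset fun _ hj => not_not.1 fun h => hj (dif_neg h))
      |>.of_exponent_ge bot_le⟩

variable {p : ℝ≥0∞} {m : ℕ}

@[simp]
lemma lpExtendByZero_apply_val (v : PiLp p (fun _ : Fin m => ℝ)) (i : Fin m) :
    lpExtendByZero p m v i = v i := by
  simp [lpExtendByZero]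

lemma lpExtendByZero_apply_of_lt (v : PiLp p (fun _ : Fin m => ℝ)) {j : ℕ} (hj : j < m) :
    lpExtendByZero p m v j = v ⟨j, hj⟩ :=
  dif_pos hj

lemma lpExtendByZero_apply_of_le (v : PiLp p (fun _ : Fin m => ℝ)) {j : ℕ} (hj : m ≤ j) :
    lpExtendByZero p m v j = 0 :=
  dif_neg hj.not_gt

lemma norm_lpExtendByZero [Fact (1 ≤ p)] (v : PiLp p (fun _ : Fin m => ℝ)) :
    ‖lpExtendByZero p m v‖ = ‖v‖ := by
  rcases eq_or_ne p ∞ with rfl | hp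
  · refine le_antisymm (lp.norm_le_of_forall_le (norm_nonneg v) fun j => ?_) ?_
    · rcases lt_or_ge j m with hj | hj
      · simpa [lpExtendByZero_apply_of_lt v hj] using PiLp.norm_apply_le v ⟨j, hj⟩
      · simp [lpExtendByZero_apply_of_le v hj]
    · rw [PiLp.norm_eq_ciSup]
      refine Real.iSup_le (fun i => ?_) (norm_nonneg _)
      simpa using lp.norm_apply_le_norm ENNReal.top_ne_zero (lpExtendByZero ∞ m v) i
  · have hp' : 0 < p.toReal := ENNReal.toReal_pos (zero_lt_one.trans_le Fact.out).ne' hp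
    rw [lp.norm_eq_tsum_rpow hp', PiLp.norm_eq_sum hp', tsum_eq_sum (s := Finset.range m),
      ← Fin.sum_univ_eq_sum_range]
    · simp
    · intro j hj
      simp [lpExtendByZero_apply_of_le v (by simpa using hj), Real.zero_rpow hp'.ne']

variable (p m) in
def lpTruncate : lp (fun _ : ℕ => ℝ) p →ₗ[ℝ] PiLp p (fun _ : Fin m => ℝ) where
  toFun x := WithLp.toLp p fun i => x i
  map_add' _ _ := rfl
  map_smul' _ _ := rfl

@[simp]
lemma lpTruncate_apply (x : lp (fun _ : ℕ => ℝ) p) (i : Fin m) : lpTruncate p m x i = x i := rfl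

lemma norm_lpTruncate_le [Fact (1 ≤ p)] (x : lp (fun _ : ℕ => ℝ) p) :
    ‖lpTruncate p m x‖ ≤ ‖x‖ := by
  rw [← norm_lpExtendByZero]
  refine lp.norm_mono (zero_lt_one.trans_le Fact.out).ne' fun j => ?_
  rcases lt_or_ge j m with hj | hj
  · simp [lpExtendByZero_apply_of_lt _ hj]
  · simp [lpExtendByZero_apply_of_le _ hj]

lemma lipschitzWith_lpTruncate [Fact (1 ≤ p)] : LipschitzWith 1 (lpTruncate p m) := by
  simpa using AddMonoidHomClass.lipschitz_of_bound (lpTruncate p m) 1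
    (by simpa using norm_lpTruncate_le)

end Truncation

section Volume

variable (ι : Type*) [Fintype ι] (q : ℝ≥0∞)

/-- Lebesgue measure transported to `ℓ_q^ι`; as an additive Haar measure for the `ℓ_q` norm it
scales balls of radius `ε` by `ε ^ card ι`. -/
noncomputable def piLpVolume : Measure (PiLp q fun _ : ι => ℝ) :=
  volume.map (MeasurableEquiv.toLp q (ι → ℝ))

instance [Fact (1 ≤ q)] : (piLpVolume ι q).IsAddHaarMeasure :=
  (PiLp.continuousLinearEquiv q ℝ fun _ : ι => ℝ).symm.isAddHaarMeasure_map volume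

variable {ι q}

lemma piLpVolume_apply (s : Set (PiLp q fun _ : ι => ℝ)) :
    piLpVolume ι q s = volume (WithLp.equiv q (ι → ℝ) '' s) := by
  rw [piLpVolume, MeasurableEquiv.map_apply, Equiv.image_eq_preimage_symm]
  rfl

end Volume

lemma ballVolume_eq_piLpVolume (q : ℝ≥0∞) [Fact (1 ≤ q)] (m : ℕ) :
    ballVolume q m = piLpVolume (Fin m) q (closedBall 0 1) :=
  (piLpVolume_apply _).symm

lemma volume_image_closedBall {q : ℝ≥0∞} [Fact (1 ≤ q)] {m : ℕ} (z : PiLp q fun _ : Fin m => ℝ)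
    {ε : ℝ} (hε : 0 ≤ ε) :
    volume (WithLp.equiv q (Fin m → ℝ) '' closedBall z ε) = .ofReal (ε ^ m) * ballVolume q m := by
  rw [← piLpVolume_apply, Measure.addHaar_closedBall' _ _ hε, ballVolume_eq_piLpVolume,
    (WithLp.linearEquiv q ℝ (Fin m → ℝ)).finrank_eq, Module.finrank_fin_fun]

lemma ballVolume_pos (q : ℝ≥0∞) [Fact (1 ≤ q)] (m : ℕ) : 0 < ballVolume q m := by
  rw [ballVolume_eq_piLpVolume]
  exact measure_closedBall_pos _ _ one_pos

lemma ballVolume_ne_top (q : ℝ≥0∞) [Fact (1 ≤ q)] (m : ℕ) : ballVolume q m ≠ ∞ := by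
  rw [ballVolume_eq_piLpVolume]
  exact measure_closedBall_lt_top.ne

lemma volume_image_diagonal {ι : Type*} [Fintype ι] [DecidableEq ι] (d : ι → ℝ) (s : Set (ι → ℝ)) :
    volume (Matrix.toLin' (Matrix.diagonal d) '' s) = .ofReal |∏ i, d i| * volume s := by
  rw [Measure.addHaar_image_linearMap, LinearMap.det_toLin', Matrix.det_diagonal]

lemma LipschitzWith.image_subset_iUnion_closedBall {X Y ι : Type*} [PseudoMetricSpace X]
    [PseudoMetricSpace Y] {f : X → Y} (hf : LipschitzWith 1 f) {T : Set X} {y : ι → X} {ε : ℝ}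
    (hT : T ⊆ ⋃ i, closedBall (y i) ε) : f '' T ⊆ ⋃ i, closedBall (f (y i)) ε := by
  rintro _ ⟨x, hx, rfl⟩
  obtain ⟨i, hi⟩ := Set.mem_iUnion.1 (hT hx)
  exact Set.mem_iUnion.2 ⟨i, by simpa using hf.mapsTo_closedBall (y i) ε hi⟩

lemma le_entropyNumber {Y : Type*} [SeminormedAddCommGroup Y] {T : Set Y}
    (hT : Bornology.IsBounded T) {n : ℕ} (hn : 1 ≤ n) {a : ℝ}
    (h : ∀ ε > 0, ∀ y : Fin n → Y, T ⊆ ⋃ i, closedBall (y i) ε → a ≤ ε) :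
    a ≤ entropyNumber n T := by
  obtain ⟨r, hr⟩ := hT.subset_closedBall 0
  refine le_csInf ⟨max r 1, by positivity, fun _ => 0, ?_⟩ fun ε ⟨hε, y, hy⟩ => h ε hε y hy
  exact hr.trans <| Set.subset_iUnion_of_subset ⟨0, hn⟩ <|
    closedBall_subset_closedBall (le_max_left _ _)

section Diagonal

variable {p q : ℝ≥0∞} [Fact (1 ≤ p)] [Fact (1 ≤ q)] {σ : ℕ → ℝ}
  {D : lp (fun _ : ℕ => ℝ) p →L[ℝ] lp (fun _ : ℕ => ℝ) q}

lemma diagonal_image_unitBall_subset_truncate_image (hD : ∀ x k, D x k = σ k * x k) (m : ℕ) :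
    Matrix.toLin' (Matrix.diagonal fun i : Fin m => σ i) ''
        (WithLp.equiv p (Fin m → ℝ) '' closedBall 0 1) ⊆
      WithLp.equiv q (Fin m → ℝ) '' (lpTruncate q m '' (D '' closedBall 0 1)) := by
  rintro _ ⟨_, ⟨v, hv, rfl⟩, rfl⟩
  refine ⟨_, ⟨_, ⟨lpExtendByZero p m v, ?_, rfl⟩, rfl⟩, ?_⟩
  · simpa [norm_lpExtendByZero] using hv
  · ext i
    simp [hD, Matrix.mulVec_diagonal]

lemma ofReal_abs_prod_mul_ballVolume_le (hD : ∀ x k, D x k = σ k * x k) {n m : ℕ} {ε : ℝ}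
    (hε : 0 ≤ ε) {y : Fin n → lp (fun _ : ℕ => ℝ) q}
    (hcov : D '' closedBall 0 1 ⊆ ⋃ i, closedBall (y i) ε) :
    .ofReal |∏ j ∈ Finset.range m, σ j| * ballVolume p m ≤
      n * (.ofReal (ε ^ m) * ballVolume q m) := by
  have hcov' := (lipschitzWith_lpTruncate (m := m)).image_subset_iUnion_closedBall hcov
  calc .ofReal |∏ j ∈ Finset.range m, σ j| * ballVolume p m
      = volume (Matrix.toLin' (Matrix.diagonal fun i : Fin m => σ i) ''
          (WithLp.equiv p (Fin m → ℝ) '' closedBall 0 1)) := by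
        rw [volume_image_diagonal, Fin.prod_univ_eq_prod_range (fun j => σ j), ballVolume]
    _ ≤ volume (⋃ i, WithLp.equiv q (Fin m → ℝ) '' closedBall (lpTruncate q m (y i)) ε) := by
        rw [← Set.image_iUnion]
        exact measure_mono <|
          (diagonal_image_unitBall_subset_truncate_image hD m).trans (Set.image_mono hcov')
    _ ≤ ∑ i, volume (WithLp.equiv q (Fin m → ℝ) '' closedBall (lpTruncate q m (y i)) ε) :=
        measure_iUnion_fintype_le _ _
    _ = n * (.ofReal (ε ^ m) * ballVolume q m) := by
        simp only [volume_image_closedBall _ hε, Finset.sum_const, Finset.card_univ,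
          Fintype.card_fin, nsmul_eq_mul]

end Diagonal

lemma rpow_one_div_le_of_ofReal_mul_le {V W : ℝ≥0∞} (hW₀ : W ≠ 0) (hW : W ≠ ∞) {a ε : ℝ}
    (ha : 0 ≤ a) (hε : 0 ≤ ε) {n m : ℕ} (hm : m ≠ 0)
    (h : .ofReal a * V ≤ n * (.ofReal (ε ^ m) * W)) :
    ((V / W).toReal * a / n) ^ (1 / (m : ℝ)) ≤ ε := by
  have hW' : 0 < W.toReal := ENNReal.toReal_pos hW₀ hW
  have hreal : a * V.toReal ≤ n * (ε ^ m * W.toReal) := by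
    simpa [ENNReal.toReal_mul, ha, hε] using ENNReal.toReal_mono (by finiteness) h
  have hbase : (V / W).toReal * a / n ≤ ε ^ m := by
    refine div_le_of_le_mul₀ n.cast_nonneg (by positivity) ?_
    rw [ENNReal.toReal_div, div_mul_eq_mul_div, div_le_iff₀ hW']
    linarith
  rw [one_div, Real.rpow_inv_le_iff_of_pos (by positivity) hε (by positivity), Real.rpow_natCast]
  exact hbase

/-- `σ k` is the paper's `σ_{k+1}`, and the supremum index `k` stands for the dimension `k + 1`. -/
theorem statement7_general (p q : ℝ≥0∞) [Fact (1 ≤ p)] [Fact (1 ≤ q)]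
    (σ : ℕ → ℝ) (hσpos : ∀ k, 0 < σ k)
    (D : lp (fun _ : ℕ => ℝ) p →L[ℝ] lp (fun _ : ℕ => ℝ) q)
    (hD : ∀ (x : lp (fun _ : ℕ => ℝ) p) (k : ℕ), D x k = σ k * x k) :
    ∀ n : ℕ, 1 ≤ n →
      (⨆ k : ℕ, ENNReal.ofReal
          (((ballVolume p (k + 1) / ballVolume q (k + 1)).toReal *
              (∏ i ∈ Finset.range (k + 1), σ i) / n) ^ (1 / (k + 1 : ℝ)))) ≤
        ENNReal.ofReal (entropyNumber n (D '' Metric.closedBall 0 1)) := by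
  intro n hn
  refine iSup_le fun k => ENNReal.ofReal_le_ofReal <|
    le_entropyNumber (D.lipschitz.isBounded_image isBounded_closedBall) hn fun ε hε y hcov => ?_
  have hprod : 0 < ∏ i ∈ Finset.range (k + 1), σ i := Finset.prod_pos fun i _ => hσpos i
  have hvol := ofReal_abs_prod_mul_ballVolume_le hD (m := k + 1) hε.le hcov
  rw [abs_of_pos hprod] at hvol
  simpa using rpow_one_div_le_of_ofReal_mul_le (ballVolume_pos q _).ne' (ballVolume_ne_top q _)
    hprod.le hε.le k.succ_ne_zero hvol

/-- **Lemma 2.4 (lower bound).**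
Let `1 ≤ p, q ≤ ∞` and let `σ` be a non-increasing sequence of positive reals tending to
zero (here `σ k` denotes the `(k+1)`-st term `σ_{k+1}` of the paper) such that the
diagonal operator `D_σ : ℓ_p → ℓ_q` is bounded.  Then for all `n ≥ 1`,
`e_n(D_σ) ≥ sup_{k ≥ 1} ((λ^k(B_{ℓ_p^k}) / λ^k(B_{ℓ_q^k})) σ_1⋯σ_k / n)^{1/k}`
(stated in `ℝ≥0∞` via `ENNReal.ofReal`, which for these non-negative quantities is
equivalent to the real inequality). -/
theorem statement7 (p q : ℝ≥0∞) [Fact (1 ≤ p)] [Fact (1 ≤ q)]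
    (σ : ℕ → ℝ) (hσpos : ∀ k, 0 < σ k) (hσanti : Antitone σ)
    (hσlim : Tendsto σ atTop (nhds 0))
    (D : lp (fun _ : ℕ => ℝ) p →L[ℝ] lp (fun _ : ℕ => ℝ) q)
    (hD : ∀ (x : lp (fun _ : ℕ => ℝ) p) (k : ℕ), D x k = σ k * x k) :
    ∀ n : ℕ, 1 ≤ n →
      (⨆ k : ℕ, ENNReal.ofReal
          (((ballVolume p (k + 1) / ballVolume q (k + 1)).toReal *
              (∏ i ∈ Finset.range (k + 1), σ i) / n) ^ (1 / (k + 1 : ℝ)))) ≤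
        ENNReal.ofReal (entropyNumber n (D '' Metric.closedBall 0 1)) :=
  statement7_general p q σ hσpos D hD
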